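/- arXiv:1801.07918 — 2 statements merged into one kernel-verified Lean document; each statement's English description precedes it below -/
import Mathlib

section
/- The m-th exterior power of an elementary transvection t_{i,j}(ξ) is a product of at most binom(n−2, m−1) elementary transvections in GL_{binom(n,m)}(R). -/
open Matrix

abbrev Idx (n m : ℕ) := {s : Finset (Fin n) // s.card = m}

def extPow {R : Type*} [CommRing R] (n m : ℕ) (x : Matrix (Fin n) (Fin n) R) :
    Matrix (Idx n m) (Idx n m) R :=
  fun I J => (x.submatrix (⇑(I.1.orderEmbOfFin I.2)) (⇑(J.1.orderEmbOfFin J.2))).det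

/-!
A minor of `t = t_{ij}(ξ)` is linear in the row indexed by `i`, so it is the corresponding minor
of the identity plus `ξ` times a `0/1` minor whose row set has `i` replaced by `j`. Hence
`∧^m t` differs from the identity only at the positions `(I, I - i + j)` with `i ∈ I`,
`j ∉ I`, and there are `binom(n-2, m-1)` of them. Every such row index contains `i` and no
such column index does, so the matrix units at these positions have pairwise vanishing
products in the relevant order, and `1 + ∑ c e_{I,J} = ∏ (1 + c e_{I,J})`.
-/

namespace Matrix

variable {R ι κ : Type*} [CommRing R] [DecidableEq κ]

theorem submatrix_transvection_of_notMem_range {f : ι → κ} (g : ι → κ) {i : κ}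
    (hi : i ∉ Set.range f) (j : κ) (c : R) :
    (transvection i j c).submatrix f g = (1 : Matrix κ κ R).submatrix f g := by
  ext a b
  have hia : i ≠ f a := fun h => hi ⟨a, h.symm⟩
  simp [transvection, hia]

variable [Fintype ι] [DecidableEq ι]

theorem det_one_submatrix_eq_zero {f g : ι → κ} (a : ι) (ha : f a ∉ Set.range g) :
    ((1 : Matrix κ κ R).submatrix f g).det = 0 :=
  det_eq_zero_of_row_eq_zero a fun b => one_apply_ne fun h => ha ⟨b, h.symm⟩

theorem det_submatrix_transvection {f : ι → κ} (hf : Function.Injective f) (g : ι → κ)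
    {a : ι} {i : κ} (ha : f a = i) (j : κ) (c : R) :
    ((transvection i j c).submatrix f g).det =
      ((1 : Matrix κ κ R).submatrix f g).det +
        c * ((1 : Matrix κ κ R).submatrix (Function.update f a j) g).det := by
  set M := (1 : Matrix κ κ R).submatrix f g
  set N := (1 : Matrix κ κ R).submatrix (Function.update f a j) g
  have hrow : (transvection i j c).submatrix f g = M.updateRow a (M a + c • N a) := by
    ext a' b
    rcases eq_or_ne a' a with rfl | ha'
    · simp [M, N, transvection, single_apply, ha, one_apply]
    · have hia : i ≠ f a' := fun h => ha' (hf (h ▸ ha).symm)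
      simp [M, transvection, hia, updateRow_ne ha']
  have hN : M.updateRow a (N a) = N := by
    ext a' b
    rcases eq_or_ne a' a with rfl | ha'
    · rw [updateRow_self]
    · simp only [M, N, updateRow_ne ha', submatrix_apply]
      rw [Function.update_of_ne ha']
  rw [hrow, det_updateRow_add, updateRow_eq_self, det_updateRow_smul, hN]

theorem prod_map_transvection_eq_one_add_sum_single (l : List (ι × ι)) (c : ι × ι → R)
    (hl : ∀ p ∈ l, ∀ q ∈ l, p.2 ≠ q.1) :
    (l.map fun p => transvection p.1 p.2 (c p)).prod =
      1 + (l.map fun p => single p.1 p.2 (c p)).sum := by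
  induction l with
  | nil => simp
  | cons p l ih =>
    have hzero : single p.1 p.2 (c p) * (l.map fun q => single q.1 q.2 (c q)).sum = 0 := by
      rw [← List.sum_map_mul_left]
      refine List.sum_eq_zero fun x hx => ?_
      obtain ⟨q, hq, rfl⟩ := List.mem_map.mp hx
      exact single_mul_single_of_ne _ _ _ _
        (hl p List.mem_cons_self q (List.mem_cons_of_mem _ hq)) _
    rw [List.map_cons, List.prod_cons, ih fun p hp q hq =>
      hl p (List.mem_cons_of_mem _ hp) q (List.mem_cons_of_mem _ hq)]
    simp only [List.map_cons, List.sum_cons, transvection, add_mul, mul_add, one_mul, mul_one,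
      hzero, add_zero]
    abel

omit [Fintype ι] in
theorem eq_one_add_sum_single_of_eq_one_off (A : Matrix ι ι R) (T : Finset (ι × ι))
    (hT : ∀ p ∈ T, p.1 ≠ p.2) (hA : ∀ p ∉ T, A p.1 p.2 = (1 : Matrix ι ι R) p.1 p.2) :
    A = 1 + ∑ p ∈ T, single p.1 p.2 (A p.1 p.2) := by
  ext a b
  rw [add_apply, sum_apply]
  by_cases hab : (a, b) ∈ T
  · rw [Finset.sum_eq_single (a, b) (fun p _ hp => single_apply_of_ne _ _ _ _ _
      fun h => hp (Prod.ext h.1 h.2)) (absurd hab), single_apply_same, one_apply_ne (hT _ hab),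
      zero_add]
  · rw [Finset.sum_eq_zero fun p hp => single_apply_of_ne _ _ _ _ _
      fun h => hab (by rwa [← h.1, ← h.2]), add_zero]
    exact hA _ hab

end Matrix

theorem Finset.card_insert_erase {α : Type*} [DecidableEq α] {s : Finset α} {i j : α}
    (hi : i ∈ s) (hj : j ∉ s) : (insert j (s.erase i)).card = s.card := by
  rw [card_insert_of_notMem fun h => hj (mem_of_mem_erase h), card_erase_add_one hi]

theorem Idx.range_orderEmbOfFin {n m : ℕ} (I : Idx n m) :
    Set.range (I.1.orderEmbOfFin I.2) = I.1 :=
  Finset.range_orderEmbOfFin I.1 I.2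

section

variable {R : Type*} [CommRing R] {n m : ℕ}

theorem extPow_one : extPow n m (1 : Matrix (Fin n) (Fin n) R) = 1 := by
  ext I J
  rcases eq_or_ne I J with rfl | hIJ
  · rw [one_apply_eq, extPow, submatrix_one _ (I.1.orderEmbOfFin I.2).injective, det_one]
  · have hsub : ¬ I.1 ⊆ J.1 := fun h =>
      hIJ (Subtype.ext (Finset.eq_of_subset_of_card_le h (by rw [I.2, J.2])))
    obtain ⟨x, hxI, hxJ⟩ := Finset.not_subset.mp hsub
    rw [← Finset.mem_coe, ← Idx.range_orderEmbOfFin] at hxI hxJ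
    obtain ⟨a, rfl⟩ := hxI
    rw [one_apply_ne hIJ, extPow, det_one_submatrix_eq_zero a hxJ]

/-- The rows of this minor are indexed by `insert j (I \ {i})`, with a repetition if `j ∈ I`. -/
theorem det_one_submatrix_update_orderEmbOfFin_eq_zero {i j : Fin n} (hij : i ≠ j)
    {I J : Idx n m} {a : Fin m} (ha : I.1.orderEmbOfFin I.2 a = i)
    (hIJ : ¬ (j ∉ I.1 ∧ J.1 = insert j (I.1.erase i))) :
    ((1 : Matrix (Fin n) (Fin n) R).submatrix
      (Function.update (I.1.orderEmbOfFin I.2) a j) (J.1.orderEmbOfFin J.2)).det = 0 := by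
  set f := I.1.orderEmbOfFin I.2
  have hiI : i ∈ I.1 := ha ▸ Finset.orderEmbOfFin_mem I.1 I.2 a
  by_cases hjI : j ∈ I.1
  · rw [← Finset.mem_coe, ← Idx.range_orderEmbOfFin] at hjI
    obtain ⟨b, hb⟩ := hjI
    have hba : b ≠ a := fun h => hij (by rw [← ha, ← hb, h])
    refine det_zero_of_row_eq hba (funext fun c => ?_)
    rw [submatrix_apply, submatrix_apply, Function.update_of_ne hba, Function.update_self, hb]
  · by_contra hdet
    have hrange : ∀ a', Function.update f a j a' ∈ J.1 := fun a' => by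
      by_contra h
      rw [← Finset.mem_coe, ← Idx.range_orderEmbOfFin] at h
      exact hdet (det_one_submatrix_eq_zero a' h)
    have hsub : insert j (I.1.erase i) ⊆ J.1 := by
      intro x hx
      rcases Finset.mem_insert.mp hx with rfl | hx
      · simpa using hrange a
      · obtain ⟨hxi, hxI⟩ := Finset.mem_erase.mp hx
        rw [← Finset.mem_coe, ← Idx.range_orderEmbOfFin] at hxI
        obtain ⟨b, rfl⟩ := hxI
        have hba : b ≠ a := fun h => hxi (h ▸ ha)
        simpa [Function.update_of_ne hba] using hrange b
    exact hIJ ⟨hjI, (Finset.eq_of_subset_of_card_le hsub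
      (by rw [Finset.card_insert_erase hiI hjI, I.2, J.2])).symm⟩

/-- Besides the diagonal, the only positions where `extPow n m (transvection i j ξ)` can be
nonzero. -/
def exchangePairs (i j : Fin n) : Finset (Idx n m × Idx n m) :=
  Finset.univ.filter fun p => i ∈ p.1.1 ∧ j ∉ p.1.1 ∧ p.2.1 = insert j (p.1.1.erase i)

theorem mem_exchangePairs {i j : Fin n} {p : Idx n m × Idx n m} :
    p ∈ exchangePairs i j ↔
      i ∈ p.1.1 ∧ j ∉ p.1.1 ∧ p.2.1 = insert j (p.1.1.erase i) := by
  simp [exchangePairs]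

theorem notMem_snd_of_mem_exchangePairs {i j : Fin n} (hij : i ≠ j) {p : Idx n m × Idx n m}
    (hp : p ∈ exchangePairs i j) : i ∉ p.2.1 := by
  rw [(mem_exchangePairs.mp hp).2.2]
  simp [hij]

theorem card_exchangePairs_le {i j : Fin n} (hij : i ≠ j) :
    (exchangePairs i j : Finset (Idx n m × Idx n m)).card ≤ (n - 2).choose (m - 1) := by
  set T : Finset (Idx n m × Idx n m) := exchangePairs i j
  have hmaps : Set.MapsTo (fun p : Idx n m × Idx n m => p.1.1.erase i) T
      (Finset.powersetCard (m - 1) ((Finset.univ.erase i).erase j)) := by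
    intro p hp
    obtain ⟨hi, hj, -⟩ := mem_exchangePairs.mp hp
    refine Finset.mem_powersetCard.mpr
      ⟨fun x hx => ?_, by rw [Finset.card_erase_of_mem hi, p.1.2]⟩
    obtain ⟨hxi, hx⟩ := Finset.mem_erase.mp hx
    exact Finset.mem_erase.mpr
      ⟨fun h => hj (h ▸ hx), Finset.mem_erase.mpr ⟨hxi, Finset.mem_univ x⟩⟩
  have hinj : Set.InjOn (fun p : Idx n m × Idx n m => p.1.1.erase i) T := by
    intro p hp q hq hpq
    obtain ⟨hpi, -, hp2⟩ := mem_exchangePairs.mp hp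
    obtain ⟨hqi, -, hq2⟩ := mem_exchangePairs.mp hq
    have h1 : p.1 = q.1 := Subtype.ext <| by
      rw [← Finset.insert_erase hpi, ← Finset.insert_erase hqi]
      exact congrArg (insert i) hpq
    exact Prod.ext h1 (Subtype.ext (by rw [hp2, hq2, h1]))
  calc T.card
      ≤ (Finset.powersetCard (m - 1) ((Finset.univ.erase i).erase j)).card :=
        Finset.card_le_card_of_injOn _ hmaps hinj
    _ = (n - 2).choose (m - 1) := by
        rw [Finset.card_powersetCard, Finset.card_erase_of_mem (by simpa using hij.symm),
          Finset.card_erase_of_mem (Finset.mem_univ i), Finset.card_univ, Fintype.card_fin,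
          Nat.sub_sub]

theorem extPow_transvection_apply_of_notMem_exchangePairs {i j : Fin n} (hij : i ≠ j) (ξ : R)
    {I J : Idx n m} (hIJ : (I, J) ∉ exchangePairs i j) :
    extPow n m (transvection i j ξ) I J = (1 : Matrix (Idx n m) (Idx n m) R) I J := by
  rw [← extPow_one]
  by_cases hi : i ∈ I.1
  · rw [← Finset.mem_coe, ← Idx.range_orderEmbOfFin] at hi
    obtain ⟨a, ha⟩ := hi
    have hupd := det_one_submatrix_update_orderEmbOfFin_eq_zero (R := R) hij ha
      (J := J) fun h => hIJ (mem_exchangePairs.mpr ⟨ha ▸ Finset.orderEmbOfFin_mem _ _ a, h⟩)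
    rw [extPow, det_submatrix_transvection (I.1.orderEmbOfFin I.2).injective _ ha, hupd,
      mul_zero, add_zero]
    rfl
  · rw [extPow, submatrix_transvection_of_notMem_range _ (by rwa [Idx.range_orderEmbOfFin])]
    rfl

end

theorem extPow_transvection_product_general {R : Type*} [CommRing R] {n m : ℕ}
    (i j : Fin n) (hij : i ≠ j) (ξ : R) :
    ∃ l : List (Matrix (Idx n m) (Idx n m) R),
      l.length ≤ (n - 2).choose (m - 1) ∧
      (∀ a ∈ l, ∃ (K L : Idx n m) (ζ : R), K ≠ L ∧ a = Matrix.transvection K L ζ) ∧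
      extPow n m (Matrix.transvection i j ξ) = l.prod := by
  set A := extPow n m (transvection i j ξ)
  set T : Finset (Idx n m × Idx n m) := exchangePairs i j
  have hT : ∀ p ∈ T, ∀ q ∈ T, p.2 ≠ q.1 := fun p hp q hq h =>
    notMem_snd_of_mem_exchangePairs hij hp (h ▸ (mem_exchangePairs.mp hq).1)
  refine ⟨T.toList.map fun p => transvection p.1 p.2 (A p.1 p.2), ?_, ?_, ?_⟩
  · simpa using card_exchangePairs_le hij
  · simp only [List.mem_map, Finset.mem_toList]
    rintro _ ⟨p, hp, rfl⟩
    exact ⟨p.1, p.2, A p.1 p.2, fun h => hT p hp p hp h.symm, rfl⟩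
  · rw [prod_map_transvection_eq_one_add_sum_single _ _ fun p hp q hq =>
      hT p (Finset.mem_toList.mp hp) q (Finset.mem_toList.mp hq), Finset.sum_map_toList]
    exact eq_one_add_sum_single_of_eq_one_off A T (fun p hp h => hT p hp p hp h.symm)
      fun p hp => extPow_transvection_apply_of_notMem_exchangePairs hij ξ hp

/-- The `m`-th exterior power of an elementary transvection `t_{i,j}(ξ)` is a product of at
most `binom(n-2, m-1)` elementary transvections in `GL_{binom(n,m)}(R)`. -/
theorem extPow_transvection_product {R : Type*} [CommRing R] {n m : ℕ} (hn : 3 ≤ n)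
    (i j : Fin n) (hij : i ≠ j) (ξ : R) :
    ∃ l : List (Matrix (Idx n m) (Idx n m) R),
      l.length ≤ (n - 2).choose (m - 1) ∧
      (∀ a ∈ l, ∃ (K L : Idx n m) (ζ : R), K ≠ L ∧ a = Matrix.transvection K L ζ) ∧
      extPow n m (Matrix.transvection i j ξ) = l.prod :=
  extPow_transvection_product_general i j hij ξ
end

section
/- Let R be a commutative ring, n ≥ 3, and A ⊴ R an ideal. Then [E(n,R), C(n,R,A)] ≤ E(n,R,A), where C(n,R,A) is the full congruence subgroup consisting of matrices congruent to a scalar matrix modulo A, and E(n,R,A) is the relative elementary group of level A. -/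
open Matrix

/-- The elementary transvection `t_{I,J}(ξ) = e + ξ e_{I,J}` as an element of `GL ι R`. -/
def tGL {R : Type*} [CommRing R] {ι : Type*} [Fintype ι] [DecidableEq ι] {I J : ι}
    (h : I ≠ J) (ξ : R) : GL ι R where
  val := Matrix.transvection I J ξ
  inv := Matrix.transvection I J (-ξ)
  val_inv := by
    rw [Matrix.transvection_mul_transvection_same _ _ h, add_neg_cancel]
    simp [Matrix.transvection]
  inv_val := by
    rw [Matrix.transvection_mul_transvection_same _ _ h, neg_add_cancel]
    simp [Matrix.transvection]

/-- `E(N, A)`: the subgroup generated by all elementary transvections of level `A`. -/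
def elemSub (R : Type*) [CommRing R] (ι : Type*) [Fintype ι] [DecidableEq ι]
    (A : Ideal R) : Subgroup (GL ι R) :=
  Subgroup.closure {g | ∃ (I J : ι) (h : I ≠ J) (ξ : R), ξ ∈ A ∧ g = tGL h ξ}

/-- `E(N, R)`: the (absolute) elementary subgroup. -/
def elemSubFull (R : Type*) [CommRing R] (ι : Type*) [Fintype ι] [DecidableEq ι] :
    Subgroup (GL ι R) :=
  Subgroup.closure {g | ∃ (I J : ι) (h : I ≠ J) (ξ : R), g = tGL h ξ}

/-- The smallest subgroup containing `S` and normalized by `F`: the closure `S^F`. -/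
def closUnder {G : Type*} [Group G] (S F : Subgroup G) : Subgroup G :=
  Subgroup.closure {g | ∃ x ∈ S, ∃ f ∈ F, g = f * x * f⁻¹}

/-- `E(N, R, A)`: the relative elementary subgroup, the normal closure of `E(N,A)`
in `E(N,R)`. -/
def relElemSub (R : Type*) [CommRing R] (ι : Type*) [Fintype ι] [DecidableEq ι]
    (A : Ideal R) : Subgroup (GL ι R) :=
  closUnder (elemSub R ι A) (elemSubFull R ι)

/-- `∧^m E(n,R)`: the image of the elementary group `E(n,R)` under the Cauchy–Binet
homomorphism, as a subgroup of `GL_{binom(n,m)}(R)`. -/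
def wedgeElem (R : Type*) [CommRing R] (n m : ℕ) : Subgroup (GL (Idx n m) R) :=
  Subgroup.closure
    {g | ∃ (i j : Fin n) (_ : i ≠ j) (ξ : R),
      (g : Matrix (Idx n m) (Idx n m) R) = extPow n m (Matrix.transvection i j ξ)}

/-!
Since `E(n,R)` normalises `E(n,R,A)`, it suffices to show `⁅t_{ij}(ξ), g⁆ ∈ E(n,R,A)` for
`g ≡ λ·1 mod A`. This commutator is `t_{ij}(ξ) (1 + u vᵀ)` with `u = g eᵢ`,
`vᵀ = -ξ eⱼᵀ g⁻¹` and `v ⬝ u = 0`. Put `zᵀ = eᵢᵀ g⁻¹`, so that `z ⬝ u = 1`; then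
`v = ∑_{p,q} z_p v_q (u_p e_q - u_q e_p)`, and `1 + u vᵀ` is the product of the `1 + u wᵀ` over
the terms `w` of this sum. All coefficients but `z_i v_j` lie in `A`. As `n ≥ 3`, each term
vanishes at a third coordinate `r`, and then
`1 + u wᵀ = (1 + u_r e_r wᵀ) ⁅1 + c e_rᵀ, 1 + e_r wᵀ⁆` with `c = u - u_r e_r`, which lies in
`E(n,R,A)` when `w` has entries in `A`. The remaining term is `w = y e_j - x e_i` with `x ∈ A`,
and it is absorbed by `t_{ij}(ξ)`: modulo conjugates of elements of `E(n,A)` by `E(n,R)`,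
`t_{ij}(ξ) (1 + u wᵀ)` becomes `t_{ij}(ξ) ⁅t_{ir}(λ), t_{rj}(y)⁆ = t_{ij}(ξ + λ y)`, and
`ξ + λ y ∈ A`.
-/

open scoped commutatorElement

section NormalizedClosure

variable {G : Type*} [Group G]

lemma le_closUnder (S F : Subgroup G) : S ≤ closUnder S F :=
  fun x hx => Subgroup.subset_closure ⟨x, hx, 1, one_mem F, by simp⟩

lemma le_normalizer_closUnder (S F : Subgroup G) :
    F ≤ Subgroup.normalizer (closUnder S F) := by
  refine Subgroup.le_normalizer_iff.mpr fun f hf x hx => ?_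
  induction hx using Subgroup.closure_induction with
  | mem y hy =>
    obtain ⟨e, he, f', hf', rfl⟩ := hy
    exact Subgroup.subset_closure ⟨e, he, f * f', mul_mem hf hf', by group⟩
  | one => simp
  | mul y z _ _ hy hz => convert mul_mem hy hz using 1; group
  | inv y _ hy => convert inv_mem hy using 1; group

variable {E N : Subgroup G}

lemma conj_mem_of_le_normalizer (hEN : E ≤ Subgroup.normalizer N) {f x : G} (hf : f ∈ E)
    (hx : x ∈ N) : f * x * f⁻¹ ∈ N :=
  Subgroup.le_normalizer_iff.mp hEN f hf x hx

lemma commutatorElement_mem_of_le_normalizer (hEN : E ≤ Subgroup.normalizer N) {f x : G}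
    (hf : f ∈ E) (hx : x ∈ N) : ⁅f, x⁆ ∈ N :=
  mul_mem (conj_mem_of_le_normalizer hEN hf hx) (inv_mem hx)

lemma commutator_closure_le_of_le_normalizer {S : Set G} {C : Subgroup G}
    (hSN : Subgroup.closure S ≤ Subgroup.normalizer N) (h : ∀ s ∈ S, ∀ g ∈ C, ⁅s, g⁆ ∈ N) :
    ⁅Subgroup.closure S, C⁆ ≤ N := by
  refine Subgroup.commutator_le.mpr fun f hf g hg => ?_
  induction hf using Subgroup.closure_induction with
  | mem s hs => exact h s hs g hg
  | one => simp
  | mul x y hx _ hxg hyg =>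
    have hxy : ⁅x * y, g⁆ = x * ⁅y, g⁆ * x⁻¹ * ⁅x, g⁆ := by
      simp only [commutatorElement_def]; group
    rw [hxy]
    exact mul_mem (conj_mem_of_le_normalizer hSN hx hyg) hxg
  | inv x hx hxg =>
    have hx' : ⁅x⁻¹, g⁆ = x⁻¹ * ⁅x, g⁆⁻¹ * x⁻¹⁻¹ := by
      simp only [commutatorElement_def]; group
    rw [hx']
    exact conj_mem_of_le_normalizer hSN (inv_mem hx) (inv_mem hxg)

/-- `t * (e₁ * ⁅e₂ * a, e₃ * b⁆)` is `t * ⁅a, b⁆` times conjugates of `e₁, e₂, e₃` and their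
inverses by elements of `E`. -/
lemma mul_mul_commutatorElement_mem (hEN : E ≤ Subgroup.normalizer N) {t a b e₁ e₂ e₃ : G}
    (ht : t ∈ E) (ha : a ∈ E) (hb : b ∈ E) (he₁ : e₁ ∈ N) (he₂ : e₂ ∈ N) (he₃ : e₃ ∈ N)
    (htab : t * ⁅a, b⁆ ∈ N) : t * (e₁ * ⁅e₂ * a, e₃ * b⁆) ∈ N := by
  have key : t * (e₁ * ⁅e₂ * a, e₃ * b⁆) =
      (t * e₁ * t⁻¹) * (t * e₂ * t⁻¹) * ((t * a) * e₃ * (t * a)⁻¹) *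
        ((t * a * b * a⁻¹) * e₂⁻¹ * (t * a * b * a⁻¹)⁻¹) *
        ((t * ⁅a, b⁆) * e₃⁻¹ * (t * ⁅a, b⁆)⁻¹) * (t * ⁅a, b⁆) := by
    simp only [commutatorElement_def]; group
  have hta : t * a ∈ E := mul_mem ht ha
  have htaba : t * a * b * a⁻¹ ∈ E := mul_mem (mul_mem hta hb) (inv_mem ha)
  have htab' : t * ⁅a, b⁆ ∈ E := by
    rw [show t * ⁅a, b⁆ = t * a * b * a⁻¹ * b⁻¹ by simp only [commutatorElement_def]; group]
    exact mul_mem htaba (inv_mem hb)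
  rw [key]
  refine mul_mem (mul_mem (mul_mem (mul_mem (mul_mem ?_ ?_) ?_) ?_) ?_) htab
  · exact conj_mem_of_le_normalizer hEN ht he₁
  · exact conj_mem_of_le_normalizer hEN ht he₂
  · exact conj_mem_of_le_normalizer hEN hta he₃
  · exact conj_mem_of_le_normalizer hEN htaba (inv_mem he₂)
  · exact conj_mem_of_le_normalizer hEN htab' (inv_mem he₃)

end NormalizedClosure

lemma single_add_update_zero {ι M : Type*} [DecidableEq ι] [AddZeroClass M] (u : ι → M)
    (r : ι) : Pi.single r (u r) + Function.update u r 0 = u := by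
  ext l
  rcases eq_or_ne l r with rfl | hlr <;> simp [*]

section RankOne

variable {R : Type*} [CommRing R] {ι : Type*} [Fintype ι] [DecidableEq ι]

def rankOneGL (c m : ι → R) (h : m ⬝ᵥ c = 0) : GL ι R where
  val := 1 + vecMulVec c m
  inv := 1 - vecMulVec c m
  val_inv := by simp [mul_sub, add_mul, vecMulVec_mul_vecMulVec, h]
  inv_val := by simp [sub_mul, mul_add, vecMulVec_mul_vecMulVec, h]

@[simp]
lemma rankOneGL_val (c m : ι → R) (h : m ⬝ᵥ c = 0) :
    (rankOneGL c m h : Matrix ι ι R) = 1 + vecMulVec c m := rfl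

lemma rankOneGL_zero_left (m : ι → R) (h : m ⬝ᵥ (0 : ι → R) = 0) : rankOneGL 0 m h = 1 :=
  Units.ext (by simp)

lemma rankOneGL_zero_right (c : ι → R) (h : (0 : ι → R) ⬝ᵥ c = 0) : rankOneGL c 0 h = 1 :=
  Units.ext (by simp)

lemma rankOneGL_eq_mul_left {c₁ c₂ c m : ι → R} (hc : c₁ + c₂ = c) (h₁ : m ⬝ᵥ c₁ = 0)
    (h₂ : m ⬝ᵥ c₂ = 0) (h : m ⬝ᵥ c = 0) :
    rankOneGL c m h = rankOneGL c₁ m h₁ * rankOneGL c₂ m h₂ := by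
  subst hc
  ext : 1
  simp [mul_add, add_mul, vecMulVec_mul_vecMulVec, h₂, add_vecMulVec, add_assoc]

lemma rankOneGL_eq_mul_right {c m₁ m₂ m : ι → R} (hm : m₁ + m₂ = m) (h₁ : m₁ ⬝ᵥ c = 0)
    (h₂ : m₂ ⬝ᵥ c = 0) (h : m ⬝ᵥ c = 0) :
    rankOneGL c m h = rankOneGL c m₁ h₁ * rankOneGL c m₂ h₂ := by
  subst hm
  ext : 1
  simp [mul_add, add_mul, vecMulVec_mul_vecMulVec, h₁, vecMulVec_add, add_assoc]

lemma rankOneGL_mem_of_sum_left {κ : Type*} {H : Subgroup (GL ι R)} (s : Finset κ)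
    {c m : ι → R} {μ : κ → ι → R} (hμ : ∑ k ∈ s, μ k = c) (hm : ∀ k ∈ s, m ⬝ᵥ μ k = 0)
    (hH : ∀ k (hk : k ∈ s), rankOneGL (μ k) m (hm k hk) ∈ H) (h : m ⬝ᵥ c = 0) :
    rankOneGL c m h ∈ H := by
  classical
  subst hμ
  induction s using Finset.induction_on with
  | empty => simp [rankOneGL_zero_left]
  | insert k s hk ih =>
    have hs : ∀ l ∈ s, m ⬝ᵥ μ l = 0 := fun l hl => hm l (Finset.mem_insert_of_mem hl)
    rw [rankOneGL_eq_mul_left (Finset.sum_insert hk).symm (hm k (Finset.mem_insert_self k s))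
      (by rw [dotProduct_sum]; exact Finset.sum_eq_zero hs)]
    exact mul_mem (hH k (Finset.mem_insert_self k s))
      (ih hs (fun l hl => hH l (Finset.mem_insert_of_mem hl)) _)

lemma rankOneGL_mem_of_sum_right {κ : Type*} {H : Subgroup (GL ι R)} (s : Finset κ)
    {c m : ι → R} {μ : κ → ι → R} (hμ : ∑ k ∈ s, μ k = m) (hc : ∀ k ∈ s, μ k ⬝ᵥ c = 0)
    (hH : ∀ k (hk : k ∈ s), rankOneGL c (μ k) (hc k hk) ∈ H) (h : m ⬝ᵥ c = 0) :
    rankOneGL c m h ∈ H := by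
  classical
  subst hμ
  induction s using Finset.induction_on with
  | empty => simp [rankOneGL_zero_right]
  | insert k s hk ih =>
    have hs : ∀ l ∈ s, μ l ⬝ᵥ c = 0 := fun l hl => hc l (Finset.mem_insert_of_mem hl)
    rw [rankOneGL_eq_mul_right (Finset.sum_insert hk).symm (hc k (Finset.mem_insert_self k s))
      (by rw [sum_dotProduct]; exact Finset.sum_eq_zero hs)]
    exact mul_mem (hH k (Finset.mem_insert_self k s))
      (ih hs (fun l hl => hH l (Finset.mem_insert_of_mem hl)) _)

lemma rankOneGL_single_single {i j : ι} (hij : i ≠ j) (a b : R)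
    (h : Pi.single j b ⬝ᵥ Pi.single i a = 0) :
    rankOneGL (Pi.single i a) (Pi.single j b) h = tGL hij (a * b) := by
  ext p q : 2
  simp only [rankOneGL_val, tGL, Matrix.transvection, Matrix.add_apply, vecMulVec_apply,
    Pi.single_apply, Matrix.single_apply]
  simp only [ite_zero_mul_ite_zero, @eq_comm _ p i, @eq_comm _ q j]

lemma rankOneGL_commutator {c d e m : ι → R} (hdc : d ⬝ᵥ c = 0) (hme : m ⬝ᵥ e = 0)
    (hmc : m ⬝ᵥ c = 0) (hde : d ⬝ᵥ e = 1) :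
    ⁅rankOneGL c d hdc, rankOneGL e m hme⁆ = rankOneGL c m hmc := by
  ext : 1
  simp [commutatorElement_def, rankOneGL, mul_add, add_mul, sub_mul, mul_sub,
    vecMulVec_mul_vecMulVec, hdc, hme, hmc, hde]
  abel

lemma conj_rankOneGL (g : GL ι R) {c m : ι → R} (h : m ⬝ᵥ c = 0) :
    g * rankOneGL c m h * g⁻¹ =
      rankOneGL ((g : Matrix ι ι R) *ᵥ c) (m ᵥ* ((g⁻¹ : GL ι R) : Matrix ι ι R))
        (by rw [← dotProduct_mulVec, mulVec_mulVec, ← Units.val_mul, inv_mul_cancel,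
          Units.val_one, one_mulVec, h]) := by
  ext : 1
  simp [mul_add, add_mul, mul_vecMulVec, vecMulVec_mul]

lemma rankOneGL_eq_mul_commutatorElement {u m : ι → R} {r : ι} (hm : m r = 0)
    (h : m ⬝ᵥ u = 0) :
    rankOneGL u m h = rankOneGL (Pi.single r (u r)) m (by simp [hm]) *
      ⁅rankOneGL (Function.update u r 0) (Pi.single r 1) (by simp),
        rankOneGL (Pi.single r 1) m (by simp [hm])⁆ := by
  have hmc : m ⬝ᵥ Function.update u r 0 = 0 := by
    rwa [← single_add_update_zero u r, dotProduct_add, dotProduct_single, hm, zero_mul,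
      zero_add] at h
  rw [rankOneGL_commutator _ _ hmc (by simp)]
  exact rankOneGL_eq_mul_left (single_add_update_zero u r) _ _ h

end RankOne

section Elementary

variable {R : Type*} [CommRing R] {ι : Type*} [Fintype ι] [DecidableEq ι] {A : Ideal R}

lemma tGL_mem_elemSub {i j : ι} (hij : i ≠ j) {ξ : R} (hξ : ξ ∈ A) :
    tGL hij ξ ∈ elemSub R ι A :=
  Subgroup.subset_closure ⟨i, j, hij, ξ, hξ, rfl⟩

lemma tGL_mem_elemSubFull {i j : ι} (hij : i ≠ j) (ξ : R) : tGL hij ξ ∈ elemSubFull R ι :=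
  Subgroup.subset_closure ⟨i, j, hij, ξ, rfl⟩

lemma tGL_mul_tGL {i j : ι} (hij : i ≠ j) (ξ η : R) :
    tGL hij ξ * tGL hij η = tGL hij (ξ + η) :=
  Units.ext (Matrix.transvection_mul_transvection_same i j hij ξ η)

lemma inv_tGL_eq_rankOneGL {i j : ι} (hij : i ≠ j) (ξ : R) :
    (tGL hij ξ)⁻¹ = rankOneGL (Pi.single i 1) (Pi.single j (-ξ)) (by simp [hij.symm]) := by
  rw [rankOneGL_single_single hij, one_mul]
  refine inv_eq_of_mul_eq_one_right ?_
  rw [tGL_mul_tGL, add_neg_cancel]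
  ext : 1
  simp [tGL]

lemma elemSub_le_elemSubFull : elemSub R ι A ≤ elemSubFull R ι :=
  Subgroup.closure_mono fun _ ⟨i, j, hij, ξ, _, hg⟩ => ⟨i, j, hij, ξ, hg⟩

lemma elemSub_le_relElemSub : elemSub R ι A ≤ relElemSub R ι A :=
  le_closUnder _ _

lemma elemSubFull_le_normalizer_relElemSub :
    elemSubFull R ι ≤ Subgroup.normalizer (relElemSub R ι A) :=
  le_normalizer_closUnder _ _

lemma rankOneGL_single_left_mem_elemSub {r : ι} {a : R} {m : ι → R} (hm : m r = 0)
    (hA : ∀ l, a * m l ∈ A) (h : m ⬝ᵥ Pi.single r a = 0) :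
    rankOneGL (Pi.single r a) m h ∈ elemSub R ι A := by
  refine rankOneGL_mem_of_sum_right Finset.univ (Finset.univ_sum_single m)
    (fun l _ => by rcases eq_or_ne r l with rfl | hrl <;> simp [*]) (fun l _ => ?_) h
  rcases eq_or_ne r l with rfl | hrl
  · simp [hm, rankOneGL_zero_right]
  · rw [rankOneGL_single_single hrl]
    exact tGL_mem_elemSub hrl (hA l)

lemma rankOneGL_single_right_mem_elemSub {r : ι} {b : R} {c : ι → R} (hc : c r = 0)
    (hA : ∀ l, c l * b ∈ A) (h : Pi.single r b ⬝ᵥ c = 0) :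
    rankOneGL c (Pi.single r b) h ∈ elemSub R ι A := by
  refine rankOneGL_mem_of_sum_left Finset.univ (Finset.univ_sum_single c)
    (fun l _ => by rcases eq_or_ne l r with rfl | hlr <;> simp [*]) (fun l _ => ?_) h
  rcases eq_or_ne l r with rfl | hlr
  · simp [hc, rankOneGL_zero_left]
  · rw [rankOneGL_single_single hlr]
    exact tGL_mem_elemSub hlr (hA l)

lemma rankOneGL_single_left_mem_elemSubFull {r : ι} {a : R} {m : ι → R} (hm : m r = 0)
    (h : m ⬝ᵥ Pi.single r a = 0) : rankOneGL (Pi.single r a) m h ∈ elemSubFull R ι :=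
  elemSub_le_elemSubFull (rankOneGL_single_left_mem_elemSub (A := ⊤) hm (fun _ => trivial) h)

lemma rankOneGL_single_right_mem_elemSubFull {r : ι} {b : R} {c : ι → R} (hc : c r = 0)
    (h : Pi.single r b ⬝ᵥ c = 0) : rankOneGL c (Pi.single r b) h ∈ elemSubFull R ι :=
  elemSub_le_elemSubFull (rankOneGL_single_right_mem_elemSub (A := ⊤) hc (fun _ => trivial) h)

lemma rankOneGL_mem_relElemSub {u m : ι → R} {r : ι} (hm : m r = 0) (hA : ∀ l, m l ∈ A)
    (h : m ⬝ᵥ u = 0) : rankOneGL u m h ∈ relElemSub R ι A := by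
  rw [rankOneGL_eq_mul_commutatorElement hm h]
  refine mul_mem (elemSub_le_relElemSub ?_) ?_
  · exact rankOneGL_single_left_mem_elemSub hm (fun l => A.mul_mem_left _ (hA l)) _
  · exact commutatorElement_mem_of_le_normalizer elemSubFull_le_normalizer_relElemSub
      (rankOneGL_single_right_mem_elemSubFull (by simp) _)
      (elemSub_le_relElemSub (rankOneGL_single_left_mem_elemSub hm (by simpa using hA) _))

lemma tGL_mul_rankOneGL_mem_relElemSub {i j r : ι} (hij : i ≠ j) (hri : r ≠ i) (hrj : r ≠ j)
    {u : ι → R} {lam ξ x y : R} (hu : ∀ l, u l - (Pi.single i lam : ι → R) l ∈ A)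
    (hx : x ∈ A) (hξ : ξ + lam * y ∈ A) (h : (Pi.single j y - Pi.single i x) ⬝ᵥ u = 0) :
    tGL hij ξ * rankOneGL u (Pi.single j y - Pi.single i x) h ∈ relElemSub R ι A := by
  have hm : (Pi.single j y - Pi.single i x : ι → R) r = 0 := by simp [hri, hrj]
  rw [rankOneGL_eq_mul_commutatorElement hm h,
    rankOneGL_eq_mul_left (c₁ := Function.update u r 0 - Pi.single i lam) (sub_add_cancel _ _)
      (by simp [Ne.symm hri]) (by simp [Ne.symm hri]),
    rankOneGL_eq_mul_right (c := Pi.single r 1) (m₁ := Pi.single i (-x)) (m₂ := Pi.single j y)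
      (by rw [Pi.single_neg, neg_add_eq_sub]) (by simp [hri]) (by simp [hrj])]
  refine mul_mul_commutatorElement_mem elemSubFull_le_normalizer_relElemSub
    (tGL_mem_elemSubFull hij ξ) (rankOneGL_single_right_mem_elemSubFull (by simp [hri]) _)
    (rankOneGL_single_left_mem_elemSubFull (by simp [hrj]) _) ?_ ?_ ?_ ?_
  · have hur : u r ∈ A := by simpa [hri] using hu r
    exact elemSub_le_relElemSub
      (rankOneGL_single_left_mem_elemSub hm (fun _ => A.mul_mem_right _ hur) _)
  · refine elemSub_le_relElemSub
      (rankOneGL_single_right_mem_elemSub (by simp [hri]) (fun l => ?_) _)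
    rcases eq_or_ne l r with rfl | hlr
    · simp [hri]
    · simpa [hlr] using hu l
  · exact elemSub_le_relElemSub (rankOneGL_single_left_mem_elemSub (by simp [hri])
      (fun l => by rw [one_mul, Pi.single_apply]; split_ifs; exacts [A.neg_mem hx, A.zero_mem])
      _)
  · rw [rankOneGL_commutator _ _ (by simp [hij]) (by simp), rankOneGL_single_single hij,
      tGL_mul_tGL]
    exact elemSub_le_relElemSub (tGL_mem_elemSub hij hξ)

end Elementary

section SkewDecomposition

variable {R : Type*} [CommRing R] {ι : Type*} [DecidableEq ι]

def skewVec (u : ι → R) (p q : ι) : ι → R := Pi.single q (u p) - Pi.single p (u q)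

lemma skewVec_dotProduct [Fintype ι] (u : ι → R) (p q : ι) : skewVec u p q ⬝ᵥ u = 0 := by
  simp [skewVec, sub_dotProduct, mul_comm]

lemma skewVec_apply_of_ne (u : ι → R) {p q l : ι} (hp : l ≠ p) (hq : l ≠ q) :
    skewVec u p q l = 0 := by
  simp [skewVec, hp, hq]

lemma smul_skewVec (u : ι → R) (a : R) (p q : ι) :
    a • skewVec u p q = Pi.single q (a * u p) - Pi.single p (a * u q) := by
  simp [skewVec, smul_sub, ← Pi.single_smul]

lemma sum_smul_skewVec [Fintype ι] {u z m : ι → R} (hzu : z ⬝ᵥ u = 1) (hmu : m ⬝ᵥ u = 0) :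
    ∑ π : ι × ι, (z π.1 * m π.2) • skewVec u π.1 π.2 = m := by
  ext l
  have hz : ∑ p, z p * m l * u p = m l * (z ⬝ᵥ u) := by
    rw [dotProduct, Finset.mul_sum]; exact Finset.sum_congr rfl fun _ _ => by ring
  have hm : ∑ q, z l * m q * u q = z l * (m ⬝ᵥ u) := by
    rw [dotProduct, Finset.mul_sum]; exact Finset.sum_congr rfl fun _ _ => by ring
  simp [Finset.sum_apply, skewVec, Pi.single_apply, Fintype.sum_prod_type, mul_sub,
    Finset.sum_sub_distrib, hz, hm, hzu, hmu]

end SkewDecomposition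

section Commutator

variable {R : Type*} [CommRing R] {ι : Type*} [Fintype ι] [DecidableEq ι] {A : Ideal R}

lemma tGL_mul_rankOneGL_mem_relElemSub_of_unimodular (hι : 3 ≤ Fintype.card ι) {i j : ι}
    (hij : i ≠ j) {u z v : ι → R} {lam ξ : R} (hzu : z ⬝ᵥ u = 1) (hvu : v ⬝ᵥ u = 0)
    (hu : ∀ l, u l - (Pi.single i lam : ι → R) l ∈ A) (hz : ∀ p ≠ i, z p ∈ A)
    (hv : ∀ q ≠ j, v q ∈ A) (hξ : ξ + lam * (z i * v j * u i) ∈ A) :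
    tGL hij ξ * rankOneGL u v hvu ∈ relElemSub R ι A := by
  have third : ∀ p q : ι, ∃ r, r ≠ p ∧ r ≠ q :=
    ENat.exists_ne_ne_of_three_le (by rw [ENat.card_eq_coe_fintype_card]; exact_mod_cast hι)
  have horth : ∀ π : ι × ι, ((z π.1 * v π.2) • skewVec u π.1 π.2) ⬝ᵥ u = 0 := fun π => by
    rw [smul_dotProduct, skewVec_dotProduct, smul_zero]
  rw [rankOneGL_eq_mul_right ((Finset.add_sum_erase _ _ (Finset.mem_univ (i, j))).trans
      (sum_smul_skewVec hzu hvu)) (horth _)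
    (by rw [sum_dotProduct]; exact Finset.sum_eq_zero fun π _ => horth π), ← mul_assoc]
  refine mul_mem ?_ (rankOneGL_mem_of_sum_right _ rfl (fun π _ => horth π) (fun π hπ => ?_) _)
  · obtain ⟨r, hri, hrj⟩ := third i j
    simp only [smul_skewVec]
    exact tGL_mul_rankOneGL_mem_relElemSub hij hri hrj hu
      (A.mul_mem_left _ (by simpa [hij.symm] using hu j)) (by simpa [mul_assoc] using hξ) _
  · obtain ⟨r, hr₁, hr₂⟩ := third π.1 π.2
    have hπA : z π.1 * v π.2 ∈ A := by
      rcases eq_or_ne π.1 i with h₁ | h₁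
      · exact A.mul_mem_left _ (hv _ fun h₂ => (Finset.mem_erase.mp hπ).1 (Prod.ext h₁ h₂))
      · exact A.mul_mem_right _ (hz _ h₁)
    exact rankOneGL_mem_relElemSub (r := r) (by simp [skewVec_apply_of_ne u hr₁ hr₂])
      (fun l => A.mul_mem_right _ hπA) _

lemma exists_map_eq_scalar_of_map_mem_center {S : Type*} [CommRing S] {f : R →+* S}
    {g : GL ι R} (hg : GeneralLinearGroup.map f g ∈ Subgroup.center (GL ι S)) :
    ∃ s : Sˣ, (g : Matrix ι ι R).map f = scalar ι (s : S) ∧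
      ((g⁻¹ : GL ι R) : Matrix ι ι R).map f = scalar ι ((s⁻¹ : Sˣ) : S) := by
  have key : ∀ (h : GL ι R) (t : Sˣ),
      GeneralLinearGroup.scalar ι t = GeneralLinearGroup.map f h →
        (h : Matrix ι ι R).map f = scalar ι (t : S) := fun h t e => by
    simpa only [GeneralLinearGroup.val_map_apply, GeneralLinearGroup.coe_scalar] using
      (congrArg Units.val e).symm
  rw [GeneralLinearGroup.center_eq_range_scalar] at hg
  obtain ⟨s, hs⟩ := hg
  exact ⟨s, key g s hs, key g⁻¹ s⁻¹ (by rw [map_inv, map_inv, hs])⟩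

theorem commutatorElement_tGL_mem_relElemSub (hι : 3 ≤ Fintype.card ι) {i j : ι} (hij : i ≠ j)
    (ξ : R) {g : GL ι R}
    (hg : GeneralLinearGroup.map (Ideal.Quotient.mk A) g ∈ Subgroup.center (GL ι (R ⧸ A))) :
    ⁅tGL hij ξ, g⁆ ∈ relElemSub R ι A := by
  obtain ⟨s, hs, hs'⟩ := exists_map_eq_scalar_of_map_mem_center hg
  obtain ⟨lam, hlam⟩ := Ideal.Quotient.mk_surjective (s : R ⧸ A)
  have hG : ∀ p q, Ideal.Quotient.mk A ((g : Matrix ι ι R) p q) =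
      if p = q then (s : R ⧸ A) else 0 := fun p q => by
    simpa [diagonal_apply] using congrFun₂ hs p q
  have hG' : ∀ p q, Ideal.Quotient.mk A (((g⁻¹ : GL ι R) : Matrix ι ι R) p q) =
      if p = q then ((s⁻¹ : (R ⧸ A)ˣ) : R ⧸ A) else 0 := fun p q => by
    simpa only [Matrix.map_apply, scalar_apply, diagonal_apply] using congrFun₂ hs' p q
  have hcomm : ⁅tGL hij ξ, g⁆ = tGL hij ξ * (g * (tGL hij ξ)⁻¹ * g⁻¹) := by
    rw [commutatorElement_def]; group
  rw [hcomm, inv_tGL_eq_rankOneGL, conj_rankOneGL]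
  refine tGL_mul_rankOneGL_mem_relElemSub_of_unimodular hι hij
    (z := Pi.single i 1 ᵥ* ((g⁻¹ : GL ι R) : Matrix ι ι R)) (lam := lam) ?_ _ ?_ ?_ ?_ ?_
  · rw [← dotProduct_mulVec, mulVec_mulVec, ← Units.val_mul, inv_mul_cancel, Units.val_one,
      one_mulVec, single_one_dotProduct, Pi.single_eq_same]
  · intro l
    rw [← Ideal.Quotient.eq_zero_iff_mem, map_sub, mulVec_single_one, col_apply, hG,
      Pi.single_apply]
    split_ifs <;> simp [hlam]
  · intro p hp
    rw [single_one_vecMul, row_apply, ← Ideal.Quotient.eq_zero_iff_mem, hG', if_neg hp.symm]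
  · intro q hq
    rw [single_vecMul, Pi.smul_apply, row_apply, smul_eq_mul]
    refine A.mul_mem_left _ ?_
    rw [← Ideal.Quotient.eq_zero_iff_mem, hG', if_neg hq.symm]
  · rw [← Ideal.Quotient.eq_zero_iff_mem]
    simp only [single_vecMul, mulVec_single_one, row_apply, col_apply, Pi.smul_apply,
      smul_eq_mul, map_add, map_mul, map_neg, map_one, hG, hG', hlam, ↓reduceIte]
    linear_combination (-(Ideal.Quotient.mk A ξ) * ((s : R ⧸ A) * ↑s⁻¹ + 1)) * s.mul_inv

end Commutator

/-- Standard commutator formula (Vaserstein, Borevich–Vavilov): for `n ≥ 3`,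
`[E(n,R), C(n,R,A)] ≤ E(n,R,A)`, where `C(n,R,A)` is the full congruence subgroup — the
preimage of the center of `GL_n(R/A)` under the reduction homomorphism — and `E(n,R,A)`
is the relative elementary group of level `A`. -/
theorem standard_commutator_formula {R : Type*} [CommRing R] {n : ℕ} (hn : 3 ≤ n)
    (A : Ideal R) :
    ⁅elemSubFull R (Fin n),
        Subgroup.comap (Matrix.GeneralLinearGroup.map (Ideal.Quotient.mk A))
          (Subgroup.center (GL (Fin n) (R ⧸ A)))⁆ ≤
      relElemSub R (Fin n) A := by
  refine commutator_closure_le_of_le_normalizer elemSubFull_le_normalizer_relElemSub ?_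
  rintro _ ⟨i, j, hij, ξ, rfl⟩ g hg
  exact commutatorElement_tGL_mem_relElemSub (by simpa using hn) hij ξ hg
end
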